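/- For all A, B ∈ M₃(F), setting a := det(A), b := tr(A^#·B), c := tr(A·B^#), d := det(B), the matrices A^#·B and B^#·A satisfy the relations: (1) (A^#·B)·(B^#·A) = a·d·1₃; (2) (A^#·B)² = −a·c·1₃ + a·(B^#·A) + b·(A^#·B); (3) (B^#·A)² = −b·d·1₃ + c·(B^#·A) + d·(A^#·B). (Hence the assignment ω ↦ −A^#·B, θ ↦ B^#·A defines a ring homomorphism from the cubic ring attached to the binary cubic a·x³ + b·x²y + c·xy² + d·y³, whose multiplication table is ωθ = −ad, ω² = −ac + aθ − bω, θ² = −bd + cθ − dω, into M₃(F).) -/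
import Mathlib


open Matrix

noncomputable section

variable {F : Type*} [Field F]

lemma sq_eq_aux' {F : Type*} [Field F] (M : Matrix (Fin 3) (Fin 3) F) :
    M ^ 2 = M.adjugate + M.trace • M - M.adjugate.trace • (1 : Matrix (Fin 3) (Fin 3) F) := by
  ext i j
  simp only [pow_two, adjugate_fin_three, trace_fin_three, Matrix.mul_apply, Fin.sum_univ_three,
    Matrix.add_apply, Matrix.sub_apply, Matrix.smul_apply, Matrix.one_apply, smul_eq_mul,
    Matrix.of_apply, Matrix.cons_val', Matrix.cons_val_zero, Matrix.cons_val_one, Matrix.head_cons,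
    Matrix.empty_val', Matrix.cons_val_fin_one, Matrix.head_fin_const]
  fin_cases i <;> fin_cases j <;> simp <;> ring

lemma adj_adj3 {F : Type*} [Field F] (A : Matrix (Fin 3) (Fin 3) F) :
    A.adjugate.adjugate = A.det • A := by
  rw [adjugate_adjugate A (by simp)]
  simp

/-- with `a = det A`, `b = tr(A^#·B)`, `c = tr(A·B^#)`, `d = det B`, the matrices
`A^#·B` and `B^#·A` satisfy `(A^#·B)(B^#·A) = ad·1`, `(A^#·B)² = −ac·1 + a·(B^#·A) + b·(A^#·B)`,
and `(B^#·A)² = −bd·1 + c·(B^#·A) + d·(A^#·B)`. -/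
theorem statement13 [CharZero F] (A B : Matrix (Fin 3) (Fin 3) F) :
    (A.adjugate * B) * (B.adjugate * A)
      = (A.det * B.det) • (1 : Matrix (Fin 3) (Fin 3) F) ∧
    (A.adjugate * B) ^ 2
      = (-(A.det * (A * B.adjugate).trace)) • (1 : Matrix (Fin 3) (Fin 3) F)
          + A.det • (B.adjugate * A) + (A.adjugate * B).trace • (A.adjugate * B) ∧
    (B.adjugate * A) ^ 2
      = (-((A.adjugate * B).trace * B.det)) • (1 : Matrix (Fin 3) (Fin 3) F)
          + (A * B.adjugate).trace • (B.adjugate * A) + B.det • (A.adjugate * B) := by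
  have hadjAB : (A.adjugate * B).adjugate = A.det • (B.adjugate * A) := by
    rw [adjugate_mul_distrib, adj_adj3, Matrix.mul_smul]
  have hadjBA : (B.adjugate * A).adjugate = B.det • (A.adjugate * B) := by
    rw [adjugate_mul_distrib, adj_adj3, Matrix.mul_smul]
  refine ⟨?_, ?_, ?_⟩
  · calc (A.adjugate * B) * (B.adjugate * A)
        = A.adjugate * (B * B.adjugate) * A := by noncomm_ring
      _ = A.adjugate * (B.det • (1 : Matrix (Fin 3) (Fin 3) F)) * A := by rw [mul_adjugate]
      _ = B.det • (A.adjugate * A) := by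
          rw [Matrix.mul_smul, Matrix.smul_mul, Matrix.mul_one]
      _ = (A.det * B.det) • (1 : Matrix (Fin 3) (Fin 3) F) := by
          rw [adjugate_mul, smul_smul, mul_comm]
  · rw [sq_eq_aux', hadjAB, trace_smul, smul_eq_mul, trace_mul_comm B.adjugate A]
    module
  · rw [sq_eq_aux', hadjBA, trace_smul, smul_eq_mul, trace_mul_comm A.adjugate B, trace_mul_comm B.adjugate A]
    module
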